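/- Let n ≥ 3 and let 𝒯₁ = (T₁, l₁) and 𝒯₂ = (T₂, l₂) be two labeled trees on the same set of n leaves, with label set {spec, dup}. Then the ELRF distance between 𝒯₁ and 𝒯₂ is at most 3n − 8. -/

import Mathlib

/-!
Choose the label `c` carried by at least half of the internal vertices of the two trees together.
Flip every internal vertex of both trees to `c`; then all internal edges can be contracted by
labeled contractions, one at a time, until each tree is the star with a single internal vertex
labeled `c`, and the two stars are isomorphic. Since a tree with `n ≥ 3` leaves and no vertex of
degree 2 has between `1` and `n - 2` internal vertices, the flips cost at most `(|I₁| + |I₂|) / 2`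
and the contractions `|I₁| + |I₂| - 2`, in total at most `3 (n - 2) - 2 = 3n - 8` operations.
-/

open Sum

inductive Lbl | spec | dup
deriving DecidableEq

/-- A labeled (unrooted) tree on leaf set `L`: internal vertices form a type `I`, the tree has
no vertex of degree 2, leaves (the vertices from `L`) have degree 1, internal vertices are
non-leaves, and each internal vertex carries a label from `{spec, dup}`. -/
structure LabTree (L : Type) : Type 1 where
  I : Type
  fin : Fintype I
  graph : SimpleGraph (L ⊕ I)
  isTree : graph.IsTree
  leaf_deg : ∀ l : L, (graph.neighborSet (inl l)).ncard = 1
  internal_deg : ∀ i : I,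
    (graph.neighborSet (inr i)).ncard ≠ 1 ∧ (graph.neighborSet (inr i)).ncard ≠ 2
  lbl : I → Lbl

variable {L : Type}

/-- Isomorphism of labeled trees, fixing every leaf. -/
def LIso (T T' : LabTree L) : Prop :=
  ∃ φ : (L ⊕ T.I) ≃ (L ⊕ T'.I),
    (∀ l : L, φ (inl l) = inl l) ∧
    (∀ a b, T'.graph.Adj (φ a) (φ b) ↔ T.graph.Adj a b) ∧
    (∀ i i', φ (inr i) = inr i' → T'.lbl i' = T.lbl i)

/-- `T'` is obtained from `T` by a label-flip: the label of exactly one internal vertex is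
changed. -/
def FlipStep (T T' : LabTree L) : Prop :=
  ∃ (φ : (L ⊕ T.I) ≃ (L ⊕ T'.I)) (u : T.I),
    (∀ l : L, φ (inl l) = inl l) ∧
    (∀ a b, T'.graph.Adj (φ a) (φ b) ↔ T.graph.Adj a b) ∧
    (∀ i i', φ (inr i) = inr i' → i ≠ u → T'.lbl i' = T.lbl i) ∧
    (∀ i', φ (inr u) = inr i' → T'.lbl i' ≠ T.lbl u)

/-- `T'` is obtained from `T` by contracting the internal edge `uv` via the quotient map `φ`:
`u` and `v` are identified, the merged vertex keeps one of the two labels, all other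
vertices and labels are unchanged. -/
def ContractionVia (T T' : LabTree L) (u v : T.I) (φ : (L ⊕ T.I) → (L ⊕ T'.I)) : Prop :=
  T.graph.Adj (inr u) (inr v) ∧
  (∀ l : L, φ (inl l) = inl l) ∧
  Function.Surjective φ ∧
  φ (inr u) = φ (inr v) ∧
  (∀ a b, φ a = φ b → a = b ∨ (a = inr u ∧ b = inr v) ∨ (a = inr v ∧ b = inr u)) ∧
  (∀ x y, T'.graph.Adj x y ↔ ∃ a b, φ a = x ∧ φ b = y ∧ T.graph.Adj a b ∧
      ¬(a = inr u ∧ b = inr v) ∧ ¬(a = inr v ∧ b = inr u)) ∧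
  (∀ i i', φ (inr i) = inr i' → i ≠ u → i ≠ v → T'.lbl i' = T.lbl i) ∧
  (∀ i', φ (inr u) = inr i' → (T'.lbl i' = T.lbl u ∨ T'.lbl i' = T.lbl v))

/-- A contraction of some internal edge (LRF operation; its reverse is an extension). -/
def IsContraction (T T' : LabTree L) : Prop :=
  ∃ u v φ, ContractionVia T T' u v φ

/-- A labeled contraction: contraction of an internal edge whose endpoints carry the same
label (ELRF operation; its reverse is a labeled extension). -/
def IsLabeledContraction (T T' : LabTree L) : Prop :=
  ∃ u v φ, T.lbl u = T.lbl v ∧ ContractionVia T T' u v φ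

/-- One ELRF operation: a label-flip, a labeled contraction, or a labeled extension. -/
def ELRFStep (T T' : LabTree L) : Prop :=
  FlipStep T T' ∨ IsLabeledContraction T T' ∨ IsLabeledContraction T' T

/-- One LRF operation: a label-flip, a contraction, or an extension. -/
def LRFStep (T T' : LabTree L) : Prop :=
  FlipStep T T' ∨ IsContraction T T' ∨ IsContraction T' T


namespace SimpleGraph

variable {V W : Type*} {G : SimpleGraph V} {φ : V → W}

theorem sum_ncard_neighborSet_eq_twice_ncard_edgeSet [Fintype V] (G : SimpleGraph V) :
    ∑ x, (G.neighborSet x).ncard = 2 * G.edgeSet.ncard := by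
  classical
  simp_rw [← coe_neighborFinset, ← coe_edgeFinset, Set.ncard_coe_finset,
    card_neighborFinset_eq_degree]
  exact G.sum_degrees_eq_twice_card_edges

theorem IsAcyclic.not_adj_of_adj_of_adj (hG : G.IsAcyclic) {a b c : V} (hab : G.Adj a b)
    (hbc : G.Adj b c) : ¬G.Adj a c := fun hac => by
  classical
  exact hG.cliqueFree le_rfl {a, b, c} (is3Clique_triple_iff.2 ⟨hab, hac, hbc⟩)

theorem Connected.map_of_surjective (hG : G.Connected) (hφ : φ.Surjective) :
    (G.map φ).Connected := by
  have : Nonempty W := hG.nonempty.map φ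
  refine .mk fun x y => ?_
  obtain ⟨a, rfl⟩ := hφ x
  obtain ⟨b, rfl⟩ := hφ y
  rw [reachable_iff_reflTransGen]
  refine Relation.ReflTransGen.lift' φ (fun a b hab => ?_) a b
    ((reachable_iff_reflTransGen a b).1 (hG a b))
  by_cases h : φ a = φ b
  · simp only [Function.onFun, h]
    exact .refl
  · exact .single ⟨h, a, b, hab, rfl, rfl⟩

section IdentifiesExactly

variable {u v : V}

def IdentifiesExactly (φ : V → W) (u v : V) : Prop :=
  ∀ a b, φ a = φ b ↔ a = b ∨ (a = u ∧ b = v) ∨ (a = v ∧ b = u)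

theorem IdentifiesExactly.injOn (hφ : IdentifiesExactly φ u v) {S : Set V}
    (hS : ¬(u ∈ S ∧ v ∈ S)) : S.InjOn φ := by
  intro a ha b hb hab
  rcases (hφ a b).1 hab with h | ⟨rfl, rfl⟩ | ⟨rfl, rfl⟩
  · exact h
  · exact (hS ⟨ha, hb⟩).elim
  · exact (hS ⟨hb, ha⟩).elim

theorem IdentifiesExactly.surjOn (hφ : IdentifiesExactly φ u v) (hne : u ≠ v)
    (hsurj : φ.Surjective) : Set.SurjOn φ (Set.univ \ {v}) Set.univ := by
  intro x _
  obtain ⟨a, rfl⟩ := hsurj x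
  by_cases ha : a = v
  · exact ⟨u, ⟨trivial, hne⟩, (hφ u a).2 (.inr (.inl ⟨rfl, ha⟩))⟩
  · exact ⟨a, ⟨trivial, ha⟩, rfl⟩

theorem IdentifiesExactly.card_add_one [Finite V] (hφ : IdentifiesExactly φ u v) (hne : u ≠ v)
    (hsurj : φ.Surjective) : Nat.card W + 1 = Nat.card V := by
  rw [← Set.ncard_univ W, ← (hφ.surjOn hne hsurj).image_eq_of_mapsTo (Set.mapsTo_univ _ _),
    (hφ.injOn (by simp)).ncard_image, Set.ncard_sdiff_singleton_add_one (Set.mem_univ v),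
    Set.ncard_univ]

theorem IdentifiesExactly.map_adj_iff (hφ : IdentifiesExactly φ u v) {x y : W} :
    (G.map φ).Adj x y ↔ ∃ a b, φ a = x ∧ φ b = y ∧ G.Adj a b ∧
      ¬(a = u ∧ b = v) ∧ ¬(a = v ∧ b = u) := by
  constructor
  · rintro ⟨hxy, a, b, hab, rfl, rfl⟩
    refine ⟨a, b, rfl, rfl, hab, fun h => hxy ?_, fun h => hxy ?_⟩ <;>
      exact (hφ a b).2 (by tauto)
  · rintro ⟨a, b, rfl, rfl, hab, h₁, h₂⟩
    refine ⟨fun h => ?_, a, b, hab, rfl, rfl⟩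
    rcases (hφ a b).1 h with rfl | h | h
    exacts [hab.ne rfl, h₁ h, h₂ h]

theorem IdentifiesExactly.neighborSet_map_of_ne (hφ : IdentifiesExactly φ u v) {a : V}
    (hu : a ≠ u) (hv : a ≠ v) : (G.map φ).neighborSet (φ a) = φ '' G.neighborSet a := by
  have hφa : ∀ b, φ b = φ a ↔ b = a := fun b => by
    rw [hφ]; constructor <;> rintro (h | ⟨h, rfl⟩ | ⟨h, rfl⟩) <;> tauto
  ext y
  simp only [mem_neighborSet, hφ.map_adj_iff, Set.mem_image, hφa]
  constructor
  · rintro ⟨a, b, rfl, rfl, hab, -⟩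
    exact ⟨b, hab, rfl⟩
  · rintro ⟨b, hab, rfl⟩
    exact ⟨a, b, rfl, rfl, hab, fun h => hu h.1, fun h => hv h.1⟩

theorem IdentifiesExactly.neighborSet_map_left (hφ : IdentifiesExactly φ u v) :
    (G.map φ).neighborSet (φ u) = φ '' ((G.neighborSet u ∪ G.neighborSet v) \ {u, v}) := by
  have hφu : ∀ a, φ a = φ u ↔ a = u ∨ a = v := fun a => by rw [hφ]; tauto
  ext y
  simp only [mem_neighborSet, hφ.map_adj_iff, Set.mem_image, Set.mem_sdiff, Set.mem_union,
    Set.mem_insert_iff, Set.mem_singleton_iff, hφu]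
  constructor
  · rintro ⟨a, b, ha, rfl, hab, h₁, h₂⟩
    refine ⟨b, ⟨?_, ?_⟩, rfl⟩
    · rcases ha with rfl | rfl
      exacts [.inl hab, .inr hab]
    · rcases ha with rfl | rfl <;> rintro (rfl | rfl) <;> simp_all
  · rintro ⟨b, ⟨hb | hb, hbuv⟩, rfl⟩
    · exact ⟨u, b, .inl rfl, rfl, hb, by tauto, by tauto⟩
    · exact ⟨v, b, .inr rfl, rfl, hb, by tauto, by tauto⟩

theorem IdentifiesExactly.ncard_neighborSet_map_of_ne (hφ : IdentifiesExactly φ u v)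
    (hG : G.IsAcyclic) (huv : G.Adj u v) {a : V} (hu : a ≠ u) (hv : a ≠ v) :
    ((G.map φ).neighborSet (φ a)).ncard = (G.neighborSet a).ncard := by
  rw [hφ.neighborSet_map_of_ne hu hv, (hφ.injOn (S := G.neighborSet a) fun h =>
    hG.not_adj_of_adj_of_adj h.1 huv h.2).ncard_image]

theorem IdentifiesExactly.ncard_neighborSet_map_left [Finite V] (hφ : IdentifiesExactly φ u v)
    (hG : G.IsAcyclic) (huv : G.Adj u v) :
    ((G.map φ).neighborSet (φ u)).ncard + 2 =
      (G.neighborSet u).ncard + (G.neighborSet v).ncard := by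
  have hdisj : Disjoint (G.neighborSet u) (G.neighborSet v) :=
    Set.disjoint_left.2 fun a hua hva => hG.not_adj_of_adj_of_adj hua.symm huv hva.symm
  have hsub : {u, v} ⊆ G.neighborSet u ∪ G.neighborSet v := by
    rintro _ (rfl | rfl)
    exacts [.inr huv.symm, .inl huv]
  have := Set.ncard_le_ncard hsub
  rw [Set.ncard_union_eq hdisj, Set.ncard_pair huv.ne] at this
  rw [hφ.neighborSet_map_left, (hφ.injOn fun h => h.1.2 (.inl rfl)).ncard_image,
    Set.ncard_sdiff hsub, Set.ncard_union_eq hdisj, Set.ncard_pair huv.ne]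
  omega

/- `φ` maps `V \ {v}` bijectively onto `W`, and the merged vertex has lost the two endpoints of
the edge `uv`; so the degree sum drops by exactly `2`. -/
theorem IdentifiesExactly.ncard_edgeSet_map [Fintype V] [Fintype W]
    (hφ : IdentifiesExactly φ u v) (hG : G.IsAcyclic) (huv : G.Adj u v) (hsurj : φ.Surjective) :
    (G.map φ).edgeSet.ncard + 1 = G.edgeSet.ncard := by
  classical
  have hus : u ∈ Finset.univ.erase v := Finset.mem_erase.2 ⟨huv.ne, Finset.mem_univ u⟩
  have hW : ∑ a ∈ Finset.univ.erase v, ((G.map φ).neighborSet (φ a)).ncard =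
      ∑ x, ((G.map φ).neighborSet x).ncard :=
    Finset.sum_nbij φ (fun _ _ => Finset.mem_univ _) (hφ.injOn (by simp))
      (by simpa using hφ.surjOn huv.ne hsurj) (fun _ _ => rfl)
  have hV : ∑ a ∈ Finset.univ.erase v, ((G.map φ).neighborSet (φ a)).ncard + 2 =
      ∑ a ∈ Finset.univ.erase v, (G.neighborSet a).ncard + (G.neighborSet v).ncard := by
    rw [← Finset.add_sum_erase _ _ hus, ← Finset.add_sum_erase _ _ hus,
      Finset.sum_congr rfl fun a ha => hφ.ncard_neighborSet_map_of_ne hG huv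
        (Finset.ne_of_mem_erase ha) (Finset.ne_of_mem_erase (Finset.mem_of_mem_erase ha))]
    have := hφ.ncard_neighborSet_map_left hG huv
    omega
  have := Finset.sum_erase_add _ (fun a => (G.neighborSet a).ncard) (Finset.mem_univ v)
  have := G.sum_ncard_neighborSet_eq_twice_ncard_edgeSet
  have := (G.map φ).sum_ncard_neighborSet_eq_twice_ncard_edgeSet
  omega

end IdentifiesExactly

theorem IsTree.map_of_identifiesExactly [Finite V] {u v : V} (hG : G.IsTree)
    (hφ : IdentifiesExactly φ u v) (hsurj : φ.Surjective) (huv : G.Adj u v) :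
    (G.map φ).IsTree := by
  have := Fintype.ofFinite V
  have : Finite W := .of_surjective φ hsurj
  have := Fintype.ofFinite W
  have hE := hφ.ncard_edgeSet_map hG.isAcyclic huv hsurj
  have hV := hφ.card_add_one huv.ne hsurj
  rw [isTree_iff_connected_and_card] at hG ⊢
  refine ⟨hG.1.map_of_surjective hsurj, ?_⟩
  rw [Nat.card_coe_set_eq] at hG ⊢
  omega

end SimpleGraph

section MergeInr

variable {I : Type} [DecidableEq I] {u v : I}

def mergeInr (h : u ≠ v) : L ⊕ I → L ⊕ {i // i ≠ v} :=
  Sum.map id fun i => if hi : i = v then ⟨u, h⟩ else ⟨i, hi⟩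

theorem mergeInr_inr_of_ne (h : u ≠ v) {i : I} (hi : i ≠ v) :
    mergeInr (L := L) h (inr i) = inr ⟨i, hi⟩ := by
  simp [mergeInr, hi]

theorem identifiesExactly_mergeInr (h : u ≠ v) :
    SimpleGraph.IdentifiesExactly (mergeInr (L := L) h) (inr u) (inr v) := by
  rintro (a | a) (b | b) <;> simp only [mergeInr, Sum.map_inl, Sum.map_inr, id, inl.injEq,
    inr.injEq, reduceCtorEq, false_and, or_false, iff_self, and_false]
  by_cases ha : a = v <;> by_cases hb : b = v <;> simp [ha, hb, Subtype.ext_iff]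
  grind

theorem surjective_mergeInr (h : u ≠ v) : (mergeInr (L := L) h).Surjective := by
  rintro (l | ⟨i, hi⟩)
  exacts [⟨inl l, rfl⟩, ⟨inr i, mergeInr_inr_of_ne h hi⟩]

end MergeInr

theorem exists_apply_inr_eq_inr {A B : Type} (ψ : L ⊕ A ≃ L ⊕ B)
    (hψ : ∀ l, ψ (inl l) = inl l) (i : A) : ∃ j, ψ (inr i) = inr j := by
  rcases h : ψ (inr i) with l | j
  · exact absurd (ψ.injective (h.trans (hψ l).symm)) inr_ne_inl
  · exact ⟨j, rfl⟩

theorem exists_inr_apply_eq_inr {A B : Type} (ψ : L ⊕ A ≃ L ⊕ B)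
    (hψ : ∀ l, ψ (inl l) = inl l) (j : B) : ∃ i, ψ (inr i) = inr j := by
  obtain ⟨i, hi⟩ := exists_apply_inr_eq_inr ψ.symm (fun l => ψ.symm_apply_eq.2 (hψ l).symm) j
  exact ⟨i, ψ.symm_apply_eq.1 hi |>.symm⟩

namespace LIso

theorem refl (T : LabTree L) : LIso T T :=
  ⟨.refl _, fun _ => rfl, fun _ _ => .rfl, fun _ _ h => by cases inr_injective h; rfl⟩

theorem symm {T T' : LabTree L} : LIso T T' → LIso T' T := by
  rintro ⟨ψ, hl, ha, hb⟩
  refine ⟨ψ.symm, fun l => ψ.symm_apply_eq.2 (hl l).symm, fun a b => ?_, fun i i' h => ?_⟩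
  · rw [← ha, ψ.apply_symm_apply, ψ.apply_symm_apply]
  · exact (hb i' i (ψ.symm_apply_eq.1 h).symm).symm

theorem trans {T₁ T₂ T₃ : LabTree L} : LIso T₁ T₂ → LIso T₂ T₃ → LIso T₁ T₃ := by
  rintro ⟨φ, hl, ha, hb⟩ ⟨ψ, hl', ha', hb'⟩
  refine ⟨φ.trans ψ, fun l => by simp [hl, hl'], fun a b => by simp [ha, ha'],
    fun i i' h => ?_⟩
  obtain ⟨j, hj⟩ := exists_apply_inr_eq_inr φ hl i
  rw [Equiv.trans_apply, hj] at h
  rw [hb' j i' h, hb i j hj]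

end LIso

namespace FlipStep

theorem symm {T T' : LabTree L} : FlipStep T T' → FlipStep T' T := by
  rintro ⟨ψ, u, hl, ha, hb, hu⟩
  obtain ⟨u', hu'⟩ := exists_apply_inr_eq_inr ψ hl u
  refine ⟨ψ.symm, u', fun l => ψ.symm_apply_eq.2 (hl l).symm, fun a b => ?_,
    fun i i' h hi => ?_, fun i' h => ?_⟩
  · rw [← ha, ψ.apply_symm_apply, ψ.apply_symm_apply]
  · have h' := (ψ.symm_apply_eq.1 h).symm
    refine (hb i' i h' ?_).symm
    rintro rfl
    exact hi (inr_injective (h'.symm.trans hu'))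
  · obtain rfl : i' = u :=
      inr_injective (ψ.injective ((ψ.symm_apply_eq.1 h).symm.trans hu'.symm))
    exact (hu u' hu').symm

theorem congr_left {T₀ T T' : LabTree L} (h : LIso T₀ T) (s : FlipStep T T') :
    FlipStep T₀ T' := by
  obtain ⟨ψ, hl, ha, hb⟩ := h
  obtain ⟨φ, u, hl', ha', hb', hu⟩ := s
  obtain ⟨u₀, hu₀⟩ := exists_inr_apply_eq_inr ψ hl u
  refine ⟨ψ.trans φ, u₀, fun l => by simp [hl, hl'], fun a b => by simp [ha, ha'],
    fun i i' h hi => ?_, fun i' h => ?_⟩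
  · obtain ⟨j, hj⟩ := exists_apply_inr_eq_inr ψ hl i
    rw [Equiv.trans_apply, hj] at h
    refine (hb' j i' h ?_).trans (hb i j hj)
    rintro rfl
    exact hi (inr_injective (ψ.injective (hj.trans hu₀.symm)))
  · rw [Equiv.trans_apply, hu₀] at h
    rw [← hb u₀ u hu₀]
    exact hu i' h

end FlipStep

theorem ContractionVia.exists_apply_inr_eq_inr {T T' : LabTree L} {u v : T.I}
    {φ : L ⊕ T.I → L ⊕ T'.I} (hC : ContractionVia T T' u v φ) (i : T.I) :
    ∃ j, φ (inr i) = inr j := by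
  obtain ⟨-, hl, -, -, hfib, -⟩ := hC
  rcases h : φ (inr i) with l | j
  · simpa using hfib _ _ (h.trans (hl l).symm)
  · exact ⟨j, rfl⟩

namespace IsLabeledContraction

theorem congr_left {T₀ T T' : LabTree L} (h : LIso T₀ T) (hC : IsLabeledContraction T T') :
    IsLabeledContraction T₀ T' := by
  obtain ⟨ψ, hl, ha, hb⟩ := h
  obtain ⟨u, v, φ, hlbl, hadj, hleaf, hsurj, hφuv, hfib, hAdj, hlbl_ne, hlbl_u⟩ := hC
  obtain ⟨u₀, hu₀⟩ := exists_inr_apply_eq_inr ψ hl u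
  obtain ⟨v₀, hv₀⟩ := exists_inr_apply_eq_inr ψ hl v
  refine ⟨u₀, v₀, φ ∘ ψ, by rw [← hb _ _ hu₀, ← hb _ _ hv₀, hlbl],
    (ha _ _).1 (by rwa [hu₀, hv₀]), fun l => by simp [hl, hleaf], hsurj.comp ψ.surjective,
    by simp [hu₀, hv₀, hφuv], fun a b hab => ?_, fun x y => ?_, fun i i' hi hiu hiv => ?_,
    fun i' hi => ?_⟩
  · have := hfib _ _ hab
    rw [← hu₀, ← hv₀] at this
    simpa only [ψ.injective.eq_iff] using this
  · rw [hAdj, ψ.surjective.exists]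
    refine exists_congr fun a => ?_
    rw [ψ.surjective.exists]
    refine exists_congr fun b => ?_
    rw [ha, ← hu₀, ← hv₀]
    simp only [Function.comp_apply, ψ.injective.eq_iff]
  · obtain ⟨j, hj⟩ := exists_apply_inr_eq_inr ψ hl i
    rw [Function.comp_apply, hj] at hi
    refine (hlbl_ne j i' hi ?_ ?_).trans (hb i j hj) <;> rintro rfl
    exacts [hiu (inr_injective (ψ.injective (hj.trans hu₀.symm))),
      hiv (inr_injective (ψ.injective (hj.trans hv₀.symm)))]
  · rw [Function.comp_apply, hu₀] at hi
    rw [← hb _ _ hu₀, ← hb _ _ hv₀]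
    exact hlbl_u i' hi

theorem congr_right {T T' T'' : LabTree L} (hC : IsLabeledContraction T T') (h : LIso T' T'') :
    IsLabeledContraction T T'' := by
  obtain ⟨ψ, hl, ha, hb⟩ := h
  obtain ⟨u, v, φ, hlbl, hC⟩ := hC
  have hinr := hC.exists_apply_inr_eq_inr
  obtain ⟨hadj, hleaf, hsurj, hφuv, hfib, hAdj, hlbl_ne, hlbl_u⟩ := hC
  refine ⟨u, v, ψ ∘ φ, hlbl, hadj, fun l => by simp [hleaf, hl], ψ.surjective.comp hsurj,
    by simp [hφuv], fun a b hab => hfib a b (ψ.injective hab), fun x y => ?_,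
    fun i i' hi hiu hiv => ?_, fun i' hi => ?_⟩
  · rw [← ψ.apply_symm_apply x, ← ψ.apply_symm_apply y, ha, hAdj]
    simp only [Function.comp_apply, ψ.injective.eq_iff]
  · obtain ⟨j, hj⟩ := hinr i
    rw [Function.comp_apply, hj] at hi
    exact (hb j i' hi).trans (hlbl_ne i j hj hiu hiv)
  · obtain ⟨j, hj⟩ := hinr u
    rw [Function.comp_apply, hj] at hi
    rw [hb j i' hi]
    exact hlbl_u j hj

end IsLabeledContraction

namespace ELRFStep

theorem symm {T T' : LabTree L} : ELRFStep T T' → ELRFStep T' T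
  | .inl h => .inl h.symm
  | .inr (.inl h) => .inr (.inr h)
  | .inr (.inr h) => .inr (.inl h)

theorem congr_left {T₀ T T' : LabTree L} (h : LIso T₀ T) : ELRFStep T T' → ELRFStep T₀ T'
  | .inl s => .inl (s.congr_left h)
  | .inr (.inl s) => .inr (.inl (s.congr_left h))
  | .inr (.inr s) => .inr (.inr (s.congr_right h.symm))

end ELRFStep

inductive ELRFChain : ℕ → LabTree L → LabTree L → Prop
  | iso {A B : LabTree L} : LIso A B → ELRFChain 0 A B
  | cons {k : ℕ} {A B C : LabTree L} : ELRFStep A B → ELRFChain k B C → ELRFChain (k + 1) A C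

namespace ELRFChain

variable {A B C : LabTree L} {k m : ℕ}

theorem congr_left {A₀ : LabTree L} (h : LIso A₀ A) : ELRFChain k A B → ELRFChain k A₀ B
  | iso h' => iso (h.trans h')
  | cons s r => cons (s.congr_left h) r

theorem trans (r₁ : ELRFChain k A B) (r₂ : ELRFChain m B C) : ELRFChain (k + m) A C := by
  induction r₁ with
  | iso h => simpa using r₂.congr_left h
  | cons s _ ih => simpa [Nat.add_right_comm] using cons s (ih r₂)

theorem single (s : ELRFStep A B) : ELRFChain 1 A B :=
  cons s (iso (.refl B))

theorem symm (r : ELRFChain k A B) : ELRFChain k B A := by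
  induction r with
  | iso h => exact iso h.symm
  | cons s _ ih => exact ih.trans (single s.symm)

theorem exists_seq (r : ELRFChain k A B) : ∃ f : ℕ → LabTree L,
    f 0 = A ∧ LIso (f k) B ∧ ∀ i < k, ELRFStep (f i) (f (i + 1)) := by
  induction r with
  | @iso A B h => exact ⟨fun _ => A, rfl, h, fun i hi => absurd hi (Nat.not_lt_zero i)⟩
  | @cons k A B C s _ ih =>
    obtain ⟨f, hf0, hfk, hf⟩ := ih
    refine ⟨fun | 0 => A | i + 1 => f i, rfl, hfk, ?_⟩
    rintro (_ | i) hi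
    · simpa [hf0] using s
    · exact hf i (by omega)

end ELRFChain

attribute [instance] LabTree.fin

namespace LabTree

def relabel (T : LabTree L) (m : T.I → Lbl) : LabTree L :=
  { T with lbl := m }

def mismatches (T : LabTree L) (c : Lbl) : Finset T.I :=
  Finset.univ.filter fun i => T.lbl i ≠ c

theorem ne_of_adj_inr {T : LabTree L} {u v : T.I} (huv : T.graph.Adj (inr u) (inr v)) : u ≠ v :=
  fun h => huv.ne (congrArg inr h)

variable (T : LabTree L)

theorem eq_of_adj_inl {l : L} {x y : L ⊕ T.I} (hx : T.graph.Adj (inl l) x)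
    (hy : T.graph.Adj (inl l) y) : x = y := by
  obtain ⟨a, ha⟩ := Set.ncard_eq_one.1 (T.leaf_deg l)
  have hx' : x ∈ T.graph.neighborSet (inl l) := hx
  have hy' : y ∈ T.graph.neighborSet (inl l) := hy
  rw [ha] at hx' hy'
  exact hx'.trans hy'.symm

/- Otherwise `{inl l₁, inl l₂}` would be a connected component. -/
theorem not_adj_inl_inl [Nonempty T.I] (l₁ l₂ : L) : ¬T.graph.Adj (inl l₁) (inl l₂) := by
  intro h
  obtain ⟨w⟩ := T.isTree.1.preconnected (inl l₁) (inr (Classical.arbitrary T.I))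
  obtain ⟨d, -, hd₁, hd₂⟩ := w.exists_boundary_dart {inl l₁, inl l₂} (by simp) (by simp)
  apply hd₂
  rcases hd₁ with hd | hd
  · simp [T.eq_of_adj_inl (hd ▸ d.adj : T.graph.Adj (inl l₁) d.snd) h]
  · simp [T.eq_of_adj_inl (hd ▸ d.adj : T.graph.Adj (inl l₂) d.snd) h.symm]

theorem exists_adj_inr [Nonempty T.I] (l : L) : ∃ i, T.graph.Adj (inl l) (inr i) := by
  obtain ⟨x, hx⟩ := Set.nonempty_of_ncard_ne_zero (s := T.graph.neighborSet (inl l))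
    (by simp [T.leaf_deg])
  rcases x with l' | i
  exacts [(T.not_adj_inl_inl l l' hx).elim, ⟨i, hx⟩]

theorem adj_iff_isLeft_ne [Subsingleton T.I] [Nonempty T.I] (a b : L ⊕ T.I) :
    T.graph.Adj a b ↔ a.isLeft ≠ b.isLeft := by
  rcases a with l | i <;> rcases b with l' | j
  · simpa using T.not_adj_inl_inl l l'
  · obtain ⟨j', h⟩ := T.exists_adj_inr l
    simpa [Subsingleton.elim j j'] using h
  · obtain ⟨i', h⟩ := T.exists_adj_inr l'
    simpa [Subsingleton.elim i i'] using h.symm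
  · simp [Subsingleton.elim i j]

/- The second vertex of a path between two internal vertices is internal: a leaf in the middle of a
path would have two distinct neighbours. -/
theorem exists_adj_inr_inr {i₁ i₂ : T.I} (hne : i₁ ≠ i₂) :
    ∃ j, T.graph.Adj (inr i₁) (inr j) := by
  obtain ⟨p, hp⟩ := (T.isTree.1.preconnected (inr i₁) (inr i₂)).exists_isPath
  have hlen : 0 < p.length := by
    by_contra h
    exact hne (inr_injective (p.eq_of_length_eq_zero (by omega)))
  have h₀₁ := p.adj_getVert_succ hlen
  rcases h : p.getVert 1 with l | j
  · have hlen' : 1 < p.length := by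
      by_contra h'
      have := p.getVert_length
      rw [show p.length = 1 by omega, h] at this
      simp at this
    have h₁₂ := p.adj_getVert_succ hlen'
    rw [h] at h₀₁ h₁₂
    have := hp.getVert_injOn (by simp) (by simp; omega) (T.eq_of_adj_inl h₀₁.symm h₁₂)
    omega
  · exact ⟨j, by simpa [h] using h₀₁⟩

theorem liso_of_card_I_eq_one {S₁ S₂ : LabTree L} (h₁ : Fintype.card S₁.I = 1)
    (h₂ : Fintype.card S₂.I = 1) {c : Lbl} (hc₁ : ∀ i, S₁.lbl i = c) (hc₂ : ∀ i, S₂.lbl i = c) :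
    LIso S₁ S₂ := by
  have := Fintype.card_le_one_iff_subsingleton.1 h₁.le
  have := Fintype.card_le_one_iff_subsingleton.1 h₂.le
  have := Fintype.card_pos_iff.1 (h₁ ▸ Nat.one_pos)
  have := Fintype.card_pos_iff.1 (h₂ ▸ Nat.one_pos)
  refine ⟨Equiv.sumCongr (Equiv.refl L) (Fintype.equivOfCardEq (h₁.trans h₂.symm)),
    fun l => rfl, fun a b => ?_, fun i i' _ => by rw [hc₁, hc₂]⟩
  rw [S₁.adj_iff_isLeft_ne, S₂.adj_iff_isLeft_ne]
  rcases a with _ | _ <;> rcases b with _ | _ <;> rfl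

theorem flipStep_relabel_update [DecidableEq T.I] (m : T.I → Lbl) {a : T.I} {x : Lbl}
    (h : m a ≠ x) : FlipStep (T.relabel m) (T.relabel (Function.update m a x)) := by
  refine ⟨.refl _, a, fun _ => rfl, fun _ _ => .rfl, fun i i' hi hne => ?_, fun i' hi => ?_⟩
  · cases inr_injective hi
    exact Function.update_of_ne (α := T.I) hne _ _
  · cases inr_injective hi
    simpa [relabel] using h.symm

theorem elrfChain_relabel_piecewise [DecidableEq T.I] (m : T.I → Lbl) (s : Finset T.I)
    (hs : ∀ i ∈ s, T.lbl i ≠ m i) : ELRFChain s.card T (T.relabel (s.piecewise m T.lbl)) := by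
  induction s using Finset.induction_on with
  | empty =>
    rw [Finset.piecewise_empty]
    exact .iso (.refl T)
  | insert a s ha ih =>
    rw [Finset.card_insert_of_notMem ha, Finset.piecewise_insert]
    refine (ih fun i hi => hs i (Finset.mem_insert_of_mem hi)).trans
      (.single (.inl (T.flipStep_relabel_update _ ?_)))
    rw [Finset.piecewise_eq_of_notMem _ _ _ ha]
    exact hs a (Finset.mem_insert_self a s)

theorem elrfChain_relabel_const (c : Lbl) :
    ELRFChain (T.mismatches c).card T (T.relabel fun _ => c) := by
  classical
  convert T.elrfChain_relabel_piecewise (fun _ => c) (T.mismatches c) (by simp [mismatches])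
    using 2
  funext i
  by_cases h : T.lbl i = c <;> simp [mismatches, h]

theorem card_mismatches_spec_add_dup :
    (T.mismatches .spec).card + (T.mismatches .dup).card = Fintype.card T.I := by
  have : T.mismatches .dup = Finset.univ.filter fun i => ¬T.lbl i ≠ .spec :=
    Finset.filter_congr fun i _ => by cases T.lbl i <;> simp
  rw [this, mismatches, Finset.card_filter_add_card_filter_not, Finset.card_univ]

variable [Fintype L]

theorem three_le_ncard_neighborSet {i : T.I} (h : (T.graph.neighborSet (inr i)).Nonempty) :
    3 ≤ (T.graph.neighborSet (inr i)).ncard := by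
  have := (Set.ncard_pos (s := T.graph.neighborSet (inr i))).2 h
  have := T.internal_deg i
  omega

theorem ncard_edgeSet : T.graph.edgeSet.ncard + 1 = Fintype.card L + Fintype.card T.I := by
  rw [← Fintype.card_sum, ← Nat.card_eq_fintype_card, ← Nat.card_coe_set_eq]
  exact (SimpleGraph.isTree_iff_connected_and_card.1 T.isTree).2

theorem card_add_sum_ncard_neighborSet_inr :
    Fintype.card L + ∑ i, (T.graph.neighborSet (inr i)).ncard + 2 =
      2 * (Fintype.card L + Fintype.card T.I) := by
  have h := T.graph.sum_ncard_neighborSet_eq_twice_ncard_edgeSet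
  simp only [Fintype.sum_sum_type, T.leaf_deg, Finset.sum_const, Finset.card_univ,
    smul_eq_mul, mul_one] at h
  have := T.ncard_edgeSet
  omega

theorem card_I_add_two_le [Nonempty L] : Fintype.card T.I + 2 ≤ Fintype.card L := by
  have h := T.card_add_sum_ncard_neighborSet_inr
  have : 3 * Fintype.card T.I ≤ ∑ i, (T.graph.neighborSet (inr i)).ncard := by
    simpa [mul_comm] using Finset.card_nsmul_le_sum Finset.univ _ 3 fun i _ =>
      T.three_le_ncard_neighborSet <| (T.isTree.1.preconnected _
        (inl (Classical.arbitrary L))).nonempty_neighborSet_left (by simp)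
  omega

theorem card_I_pos (hL : 3 ≤ Fintype.card L) : 0 < Fintype.card T.I := by
  have h := T.card_add_sum_ncard_neighborSet_inr
  by_contra h0
  have : IsEmpty T.I := Fintype.card_eq_zero_iff.1 (by omega)
  simp only [Finset.univ_eq_empty, Finset.sum_empty] at h
  omega

section Contract

variable {u v : T.I} (huv : T.graph.Adj (inr u) (inr v))

/- The internal vertex `v` is merged into `u`, which keeps its label. -/
open Classical in
noncomputable def contract : LabTree L where
  I := {i // i ≠ v}
  fin := inferInstance
  graph := T.graph.map (mergeInr (ne_of_adj_inr huv))
  isTree := T.isTree.map_of_identifiesExactly (identifiesExactly_mergeInr _)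
    (surjective_mergeInr _) huv
  leaf_deg l := by
    rw [← T.leaf_deg l]
    exact (identifiesExactly_mergeInr _).ncard_neighborSet_map_of_ne T.isTree.isAcyclic huv
      (a := inl l) (by simp) (by simp)
  internal_deg := by
    rintro ⟨w, hw⟩
    have hφ := identifiesExactly_mergeInr (L := L) (ne_of_adj_inr huv)
    rw [← mergeInr_inr_of_ne (ne_of_adj_inr huv) hw]
    by_cases hwu : w = u
    · subst hwu
      have := hφ.ncard_neighborSet_map_left T.isTree.isAcyclic huv
      have := T.three_le_ncard_neighborSet ⟨_, huv⟩
      have := T.three_le_ncard_neighborSet ⟨_, huv.symm⟩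
      omega
    · rw [hφ.ncard_neighborSet_map_of_ne T.isTree.isAcyclic huv (by simpa using hwu)
        (by simpa using hw)]
      exact T.internal_deg w
  lbl i := T.lbl i

theorem card_contract : Fintype.card (T.contract huv).I + 1 = Fintype.card T.I := by
  classical
  have := Fintype.card_pos_iff.2 ⟨v⟩
  rw [Fintype.card_congr (α := (T.contract huv).I) (β := {i // i ≠ v}) (.refl _),
    Fintype.card_subtype_compl, Fintype.card_subtype_eq]
  omega

theorem isLabeledContraction_contract (hl : T.lbl u = T.lbl v) :
    IsLabeledContraction T (T.contract huv) := by
  classical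
  have hφ := identifiesExactly_mergeInr (L := L) (ne_of_adj_inr huv)
  refine ⟨u, v, _, hl, huv, fun _ => rfl, surjective_mergeInr _, (hφ _ _).2 (by simp),
    fun a b => (hφ a b).1, fun x y => hφ.map_adj_iff, fun i i' h _ hv => ?_, fun i' h => ?_⟩
  · rw [mergeInr_inr_of_ne _ hv] at h
    cases inr_injective h
    rfl
  · rw [mergeInr_inr_of_ne _ (ne_of_adj_inr huv)] at h
    cases inr_injective h
    exact .inl rfl

end Contract

theorem exists_elrfChain_star_of_lbl_eq (c : Lbl) (k : ℕ) (hc : ∀ i, T.lbl i = c)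
    (hk : Fintype.card T.I = k + 1) :
    ∃ S, ELRFChain k T S ∧ Fintype.card S.I = 1 ∧ ∀ i, S.lbl i = c := by
  induction k generalizing T with
  | zero => exact ⟨T, .iso (.refl T), hk, hc⟩
  | succ k ih =>
    obtain ⟨i₁, i₂, hne⟩ := Fintype.exists_pair_of_one_lt_card (α := T.I) (by omega)
    obtain ⟨j, huv⟩ := T.exists_adj_inr_inr hne
    obtain ⟨S, r, hS⟩ := ih (T.contract huv) (fun i => hc i.1)
      (by have := T.card_contract huv; omega)
    exact ⟨S, .cons (.inr (.inl (T.isLabeledContraction_contract huv (by rw [hc, hc])))) r, hS⟩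

theorem exists_elrfChain_star (c : Lbl) (hT : 0 < Fintype.card T.I) :
    ∃ S, ELRFChain ((T.mismatches c).card + (Fintype.card T.I - 1)) T S ∧
      Fintype.card S.I = 1 ∧ ∀ i, S.lbl i = c := by
  obtain ⟨S, r, hS⟩ := (T.relabel fun _ => c).exists_elrfChain_star_of_lbl_eq c _ (fun _ => rfl)
    (Nat.sub_add_cancel hT).symm
  exact ⟨S, (T.elrfChain_relabel_const c).trans r, hS⟩

end LabTree

theorem exists_elrfChain_le [Fintype L] (hL : 3 ≤ Fintype.card L) (T₁ T₂ : LabTree L) :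
    ∃ k ≤ 3 * Fintype.card L - 8, ELRFChain k T₁ T₂ := by
  have : Nonempty L := Fintype.card_pos_iff.1 (by omega)
  obtain ⟨c, hc⟩ : ∃ c, 2 * ((T₁.mismatches c).card + (T₂.mismatches c).card) ≤
      Fintype.card T₁.I + Fintype.card T₂.I := by
    have := T₁.card_mismatches_spec_add_dup
    have := T₂.card_mismatches_spec_add_dup
    by_cases h : (T₁.mismatches .spec).card + (T₂.mismatches .spec).card ≤
      (T₁.mismatches .dup).card + (T₂.mismatches .dup).card
    exacts [⟨.spec, by omega⟩, ⟨.dup, by omega⟩]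
  obtain ⟨S₁, r₁, h₁, hc₁⟩ := T₁.exists_elrfChain_star c (T₁.card_I_pos hL)
  obtain ⟨S₂, r₂, h₂, hc₂⟩ := T₂.exists_elrfChain_star c (T₂.card_I_pos hL)
  refine ⟨_, ?_, r₁.trans ((ELRFChain.iso (LabTree.liso_of_card_I_eq_one h₁ h₂ hc₁ hc₂)).trans
    r₂.symm)⟩
  have := T₁.card_I_add_two_le
  have := T₂.card_I_add_two_le
  have := T₁.card_I_pos hL
  have := T₂.card_I_pos hL
  omega

/-- the ELRF distance between two labeled trees on the same set of `n ≥ 3`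
leaves is at most `3n − 8`: one can be transformed into the other by at most `3n − 8`
label-flips, labeled contractions, and labeled extensions. -/
theorem stmt14 [Fintype L] (n : ℕ) (hn : Fintype.card L = n) (h3 : 3 ≤ n)
    (T₁ T₂ : LabTree L) :
    ∃ k ≤ 3 * n - 8, ∃ f : ℕ → LabTree L,
      LIso (f 0) T₁ ∧ LIso (f k) T₂ ∧ ∀ i < k, ELRFStep (f i) (f (i + 1)) := by
  subst hn
  obtain ⟨k, hk, r⟩ := exists_elrfChain_le h3 T₁ T₂
  obtain ⟨f, hf0, hfk, hf⟩ := r.exists_seq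
  exact ⟨k, hk, f, hf0 ▸ .refl T₁, hfk, hf⟩
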